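/- Let A, B, C > 0, q > 1, and W ∈ ℝ, and suppose ((q−1)^{(q−1)/2} / (q+1)^{(q+1)/2}) · A^{(q+1)/2} / B^{(q−1)/2} > C/2. Define F : (0,∞) → ℝ by F(t) = (1/2) A t² − B log t − (C/(q+1)) t^{q+1} + W. Then there exist t⁺, t⁻ ∈ (0,∞) with t⁺ < t⁻ such that F′(t⁺) = F′(t⁻) = 0, F′(t) ≠ 0 for every t ∈ (0,∞) with t ≠ t⁺ and t ≠ t⁻, t⁺ is a local minimum point of F, t⁻ is a local maximum point of F, and F(t⁺) < F(t⁻). -/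

import Mathlib

/-!
For `t > 0` we have `t F'(t) = g(t) := A t² − B − C t^{q+1}`, and
`g'(t) = t (2A − C(q+1) t^{q−1})`, so `g` increases up to the point `τ` with
`τ^{q−1} = 2A / (C(q+1))` and decreases afterwards. Moreover `g(0) = −B < 0`,
`g((A/C)^{1/(q−1)}) = −B < 0`, and `g(τ) = A τ² (q−1)/(q+1) − B`, which is positive exactly
under the hypothesis on `A, B, C, q`. Hence `F'` vanishes at exactly two points `t⁺ < t⁻`,
changing sign from `−` to `+` at `t⁺` and from `+` to `−` at `t⁻`; the first derivative test
and the monotonicity of `F` on `[t⁺, t⁻]` give the rest.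
-/

noncomputable section

/-- The fiber function `F(t) = (1/2)At² − B log t − (C/(q+1)) t^{q+1} + W`. -/
def Ffib (A B C q W : ℝ) : ℝ → ℝ :=
  fun t => (1 / 2) * A * t ^ 2 - B * Real.log t - C / (q + 1) * t ^ (q + 1) + W

open Real Set

structure IsNegPosNeg (h : ℝ → ℝ) (a tp tm : ℝ) : Prop where
  lt_left : a < tp
  lt : tp < tm
  zero_left : h tp = 0
  zero_right : h tm = 0
  neg_left : ∀ t ∈ Ioo a tp, h t < 0
  pos_mid : ∀ t ∈ Ioo tp tm, 0 < h t
  neg_right : ∀ t ∈ Ioi tm, h t < 0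

namespace IsNegPosNeg

variable {h : ℝ → ℝ} {a tp tm : ℝ}

lemma eq_or_eq_of_eq_zero (hs : IsNegPosNeg h a tp tm) {t : ℝ} (ht : a < t) (h0 : h t = 0) :
    t = tp ∨ t = tm := by
  rcases lt_trichotomy t tp with h1 | rfl | h1
  · exact absurd h0 (hs.neg_left t ⟨ht, h1⟩).ne
  · exact .inl rfl
  rcases lt_trichotomy t tm with h2 | rfl | h2
  · exact absurd h0 (hs.pos_mid t ⟨h1, h2⟩).ne'
  · exact .inr rfl
  · exact absurd h0 (hs.neg_right t h2).ne

lemma of_eq_div {k w : ℝ → ℝ} (hs : IsNegPosNeg h a tp tm) (hw : ∀ t ∈ Ioi a, 0 < w t)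
    (hk : ∀ t ∈ Ioi a, k t = h t / w t) : IsNegPosNeg k a tp tm := by
  have htp : tp ∈ Ioi a := hs.lt_left
  have htm : tm ∈ Ioi a := hs.lt_left.trans hs.lt
  refine ⟨hs.lt_left, hs.lt, ?_, ?_, fun t ht => ?_, fun t ht => ?_, fun t ht => ?_⟩
  · rw [hk tp htp, hs.zero_left, zero_div]
  · rw [hk tm htm, hs.zero_right, zero_div]
  · have hta : t ∈ Ioi a := ht.1
    rw [hk t hta]
    exact div_neg_of_neg_of_pos (hs.neg_left t ht) (hw t hta)
  · have hta : t ∈ Ioi a := mem_Ioi.2 (hs.lt_left.trans ht.1)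
    rw [hk t hta]
    exact div_pos (hs.pos_mid t ht) (hw t hta)
  · have hta : t ∈ Ioi a := mem_Ioi.2 (htm.out.trans ht)
    rw [hk t hta]
    exact div_neg_of_neg_of_pos (hs.neg_right t ht) (hw t hta)

variable {f : ℝ → ℝ}

lemma isLocalMin (hs : IsNegPosNeg (deriv f) a tp tm) (hf : DifferentiableOn ℝ f (Ioi a)) :
    IsLocalMin f tp :=
  isLocalMin_of_deriv_Ioo hs.lt_left hs.lt
    (hf.continuousOn.continuousAt (Ioi_mem_nhds hs.lt_left)) (hf.mono Ioo_subset_Ioi_self)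
    (hf.mono fun _ ht => hs.lt_left.trans ht.1) (fun t ht => (hs.neg_left t ht).le)
    fun t ht => (hs.pos_mid t ht).le

lemma isLocalMax (hs : IsNegPosNeg (deriv f) a tp tm) (hf : DifferentiableOn ℝ f (Ioi a)) :
    IsLocalMax f tm :=
  have htm : a < tm := hs.lt_left.trans hs.lt
  isLocalMax_of_deriv_Ioo hs.lt (lt_add_one tm) (hf.continuousOn.continuousAt (Ioi_mem_nhds htm))
    (hf.mono fun _ ht => hs.lt_left.trans ht.1) (hf.mono fun _ ht => htm.trans ht.1)
    (fun t ht => (hs.pos_mid t ht).le) fun t ht => (hs.neg_right t ht.1).le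

lemma apply_lt_apply (hs : IsNegPosNeg (deriv f) a tp tm) (hf : DifferentiableOn ℝ f (Ioi a)) :
    f tp < f tm := by
  have hmono : StrictMonoOn f (Icc tp tm) :=
    strictMonoOn_of_deriv_pos (convex_Icc tp tm)
      (hf.continuousOn.mono fun t ht => hs.lt_left.trans_le ht.1)
      fun t ht => hs.pos_mid t (by rwa [interior_Icc] at ht)
  exact hmono (left_mem_Icc.2 hs.lt.le) (right_mem_Icc.2 hs.lt.le) hs.lt

end IsNegPosNeg

theorem exists_isNegPosNeg_of_strictMonoOn_of_strictAntiOn {g : ℝ → ℝ} {a c b : ℝ}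
    (hac : a ≤ c) (hcb : c < b) (hg : ContinuousOn g (Ici a)) (hmono : StrictMonoOn g (Icc a c))
    (hanti : StrictAntiOn g (Ici c)) (ha : g a < 0) (hc : 0 < g c) (hb : g b < 0) :
    ∃ tp tm, IsNegPosNeg g a tp tm := by
  obtain ⟨tp, htp, hgtp⟩ := intermediate_value_Ioo hac (hg.mono Icc_subset_Ici_self) ⟨ha, hc⟩
  obtain ⟨tm, htm, hgtm⟩ := intermediate_value_Ioo' hcb.le
    (hg.mono fun t ht => hac.trans ht.1) ⟨hb, hc⟩
  refine ⟨tp, tm, htp.1, htp.2.trans htm.1, hgtp, hgtm, fun t ht => ?_, fun t ht => ?_,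
    fun t ht => ?_⟩
  · rw [← hgtp]
    exact hmono ⟨ht.1.le, (ht.2.trans htp.2).le⟩ ⟨htp.1.le, htp.2.le⟩ ht.2
  · rcases le_or_gt t c with htc | htc
    · rw [← hgtp]
      exact hmono ⟨htp.1.le, htp.2.le⟩ ⟨(htp.1.trans ht.1).le, htc⟩ ht.1
    · rw [← hgtm]
      exact hanti htc.le htm.1.le ht.2
  · rw [← hgtm]
    exact hanti htm.1.le (htm.1.trans ht).le ht

namespace Ffib

variable {A B C q W t : ℝ}

lemma hasDerivAt (hq : q + 1 ≠ 0) (ht : 0 < t) :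
    HasDerivAt (Ffib A B C q W) (A * t - B / t - C * t ^ q) t := by
  have h₁ : HasDerivAt (fun t : ℝ => 1 / 2 * A * t ^ 2) (A * t) t := by
    refine ((hasDerivAt_pow 2 t).const_mul (1 / 2 * A)).congr_deriv ?_
    push_cast
    ring
  have h₂ : HasDerivAt (fun t : ℝ => C / (q + 1) * t ^ (q + 1)) (C * t ^ q) t := by
    refine ((hasDerivAt_rpow_const (.inl ht.ne')).const_mul (C / (q + 1))).congr_deriv ?_
    rw [add_sub_cancel_right]
    field_simp
  exact ((h₁.sub ((hasDerivAt_log ht.ne').const_mul B)).sub h₂).add_const W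

def numer (A B C q : ℝ) (t : ℝ) : ℝ := A * t ^ 2 - B - C * t ^ (q + 1)

lemma deriv_eq (hq : q + 1 ≠ 0) (ht : 0 < t) :
    deriv (Ffib A B C q W) t = numer A B C q t / t := by
  rw [(hasDerivAt hq ht).deriv, numer, rpow_add ht, rpow_one]
  field_simp

lemma numer_eq (ht : 0 < t) : numer A B C q t = t ^ 2 * (A - C * t ^ (q - 1)) - B := by
  rw [numer, show q + 1 = 2 + (q - 1) by ring, rpow_add ht, rpow_two]
  ring

lemma continuous_numer (hq : 0 ≤ q + 1) : Continuous (numer A B C q) := by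
  unfold numer
  fun_prop (disch := exact hq)

lemma numer_zero (hq : 0 < q + 1) : numer A B C q 0 = -B := by
  simp [numer, zero_rpow hq.ne']

lemma hasDerivAt_numer (ht : 0 < t) :
    HasDerivAt (numer A B C q) (t * (2 * A - C * (q + 1) * t ^ (q - 1))) t := by
  refine (((hasDerivAt_pow 2 t).const_mul A).sub_const B |>.sub
    ((hasDerivAt_rpow_const (p := q + 1) (.inl ht.ne')).const_mul C)).congr_deriv ?_
  rw [add_sub_cancel_right, rpow_sub_one ht.ne']
  field_simp
  ring

def peak (A C q : ℝ) : ℝ := (2 * A / (C * (q + 1))) ^ (q - 1)⁻¹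

lemma rpow_lt_of_cond (hA : 0 < A) (hB : 0 < B) (hC : 0 < C) (hq : 1 < q)
    (hcond : C / 2 < (q - 1) ^ ((q - 1) / 2) / (q + 1) ^ ((q + 1) / 2) *
      (A ^ ((q + 1) / 2) / B ^ ((q - 1) / 2))) :
    (B * (q + 1) / (A * (q - 1))) ^ ((q - 1) / 2) < 2 * A / (C * (q + 1)) := by
  have hq₁ : 0 < q - 1 := by linarith
  have hq₂ : 0 < q + 1 := by linarith
  set e := (q - 1) / 2
  rw [show (q + 1) / 2 = e + 1 by ring, rpow_add_one hq₂.ne', rpow_add_one hA.ne'] at hcond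
  rw [div_rpow (by positivity) (by positivity), mul_rpow hB.le hq₂.le, mul_rpow hA.le hq₁.le]
  have hpos : 0 < 2 * (q + 1) ^ e * (q + 1) * B ^ e := by positivity
  rw [div_lt_div_iff₀ (by positivity) (by positivity)]
  calc B ^ e * (q + 1) ^ e * (C * (q + 1)) = C / 2 * (2 * (q + 1) ^ e * (q + 1) * B ^ e) := by ring
    _ < (q - 1) ^ e / ((q + 1) ^ e * (q + 1)) * (A ^ e * A / B ^ e) *
        (2 * (q + 1) ^ e * (q + 1) * B ^ e) := mul_lt_mul_of_pos_right hcond hpos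
    _ = 2 * A * (A ^ e * (q - 1) ^ e) := by field_simp

lemma peak_pos (hA : 0 < A) (hC : 0 < C) (hq : 1 < q) : 0 < peak A C q := by
  have : 0 < q + 1 := by linarith
  unfold peak
  positivity

lemma peak_rpow (hA : 0 < A) (hC : 0 < C) (hq : 1 < q) :
    peak A C q ^ (q - 1) = 2 * A / (C * (q + 1)) := by
  have : 0 < q + 1 := by linarith
  exact rpow_inv_rpow (by positivity) (by linarith)

lemma strictMonoOn_numer (hA : 0 < A) (hC : 0 < C) (hq : 1 < q) :
    StrictMonoOn (numer A B C q) (Icc 0 (peak A C q)) := by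
  have hq₂ : 0 < q + 1 := by linarith
  refine strictMonoOn_of_deriv_pos (convex_Icc _ _) (continuous_numer hq₂.le).continuousOn
    fun t ht => ?_
  rw [interior_Icc] at ht
  have hlt : t ^ (q - 1) < 2 * A / (C * (q + 1)) :=
    (lt_rpow_inv_iff_of_pos ht.1.le (by positivity) (by linarith)).1 ht.2
  rw [lt_div_iff₀ (by positivity)] at hlt
  rw [(hasDerivAt_numer ht.1).deriv]
  exact mul_pos ht.1 (by linarith)

lemma strictAntiOn_numer (hA : 0 < A) (hC : 0 < C) (hq : 1 < q) :
    StrictAntiOn (numer A B C q) (Ici (peak A C q)) := by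
  have hq₂ : 0 < q + 1 := by linarith
  refine strictAntiOn_of_deriv_neg (convex_Ici _) (continuous_numer hq₂.le).continuousOn
    fun t ht => ?_
  rw [interior_Ici] at ht
  have ht₀ : 0 < t := (peak_pos hA hC hq).trans ht
  have hlt : 2 * A / (C * (q + 1)) < t ^ (q - 1) :=
    (rpow_inv_lt_iff_of_pos (by positivity) ht₀.le (by linarith)).1 ht
  rw [div_lt_iff₀ (by positivity)] at hlt
  rw [(hasDerivAt_numer ht₀).deriv]
  exact mul_neg_of_pos_of_neg ht₀ (by linarith)

lemma numer_peak_pos (hA : 0 < A) (hB : 0 < B) (hC : 0 < C) (hq : 1 < q)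
    (hcond : C / 2 < (q - 1) ^ ((q - 1) / 2) / (q + 1) ^ ((q + 1) / 2) *
      (A ^ ((q + 1) / 2) / B ^ ((q - 1) / 2))) :
    0 < numer A B C q (peak A C q) := by
  have hq₁ : 0 < q - 1 := by linarith
  have hq₂ : 0 < q + 1 := by linarith
  have hτ := peak_pos hA hC hq
  have hsq : B * (q + 1) / (A * (q - 1)) < peak A C q ^ 2 := by
    rw [← rpow_lt_rpow_iff (by positivity) (by positivity) (by positivity : 0 < (q - 1) / 2),
      ← rpow_natCast_mul hτ.le, show ((2 : ℕ) : ℝ) * ((q - 1) / 2) = q - 1 by push_cast; ring,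
      peak_rpow hA hC hq]
    exact rpow_lt_of_cond hA hB hC hq hcond
  rw [div_lt_iff₀ (by positivity)] at hsq
  rw [numer_eq hτ, peak_rpow hA hC hq]
  have hval : peak A C q ^ 2 * (A - C * (2 * A / (C * (q + 1)))) - B =
      (peak A C q ^ 2 * (A * (q - 1)) - B * (q + 1)) / (q + 1) := by
    field_simp
    ring
  rw [hval]
  exact div_pos (by linarith) hq₂

lemma numer_rpow_inv (hA : 0 < A) (hC : 0 < C) (hq : 1 < q) :
    numer A B C q ((A / C) ^ (q - 1)⁻¹) = -B := by
  rw [numer_eq (by positivity), rpow_inv_rpow (by positivity) (by linarith),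
    mul_div_cancel₀ _ hC.ne', sub_self, mul_zero, zero_sub]

lemma peak_lt (hA : 0 < A) (hC : 0 < C) (hq : 1 < q) : peak A C q < (A / C) ^ (q - 1)⁻¹ := by
  have hq₂ : 0 < q + 1 := by linarith
  refine rpow_lt_rpow (by positivity) ?_ (inv_pos.2 (by linarith))
  rw [div_lt_div_iff₀ (by positivity) hC]
  nlinarith [mul_pos hA hC]

end Ffib

/-- Under the strict inequality condition, `F` has exactly two critical points on `(0,∞)`:
a local minimizer `t⁺` and a local maximizer `t⁻` with `t⁺ < t⁻` and `F(t⁺) < F(t⁻)`. -/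
theorem stmt15 (A B C q W : ℝ) (hA : 0 < A) (hB : 0 < B) (hC : 0 < C) (hq : 1 < q)
    (hcond : C / 2 < (q - 1) ^ ((q - 1) / 2) / (q + 1) ^ ((q + 1) / 2) *
      (A ^ ((q + 1) / 2) / B ^ ((q - 1) / 2))) :
    ∃ tp tm : ℝ, 0 < tp ∧ tp < tm ∧
      deriv (Ffib A B C q W) tp = 0 ∧ deriv (Ffib A B C q W) tm = 0 ∧
      (∀ t : ℝ, 0 < t → t ≠ tp → t ≠ tm → deriv (Ffib A B C q W) t ≠ 0) ∧
      IsLocalMin (Ffib A B C q W) tp ∧ IsLocalMax (Ffib A B C q W) tm ∧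
      Ffib A B C q W tp < Ffib A B C q W tm := by
  have hq₀ : 0 < q + 1 := by linarith
  obtain ⟨tp, tm, hnumer⟩ := exists_isNegPosNeg_of_strictMonoOn_of_strictAntiOn
    (Ffib.peak_pos hA hC hq).le (Ffib.peak_lt hA hC hq) (Ffib.continuous_numer hq₀.le).continuousOn
    (Ffib.strictMonoOn_numer hA hC hq) (Ffib.strictAntiOn_numer hA hC hq)
    (by rw [Ffib.numer_zero hq₀]; linarith) (Ffib.numer_peak_pos hA hB hC hq hcond)
    (by rw [Ffib.numer_rpow_inv hA hC hq]; linarith)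
  have hderiv : IsNegPosNeg (deriv (Ffib A B C q W)) 0 tp tm :=
    hnumer.of_eq_div (fun _ ht => ht) fun _ ht => Ffib.deriv_eq hq₀.ne' ht
  have hdiff : DifferentiableOn ℝ (Ffib A B C q W) (Ioi 0) := fun _ ht =>
    (Ffib.hasDerivAt hq₀.ne' ht).differentiableAt.differentiableWithinAt
  refine ⟨tp, tm, hderiv.lt_left, hderiv.lt, hderiv.zero_left, hderiv.zero_right,
    fun t ht htp htm h0 => ?_, hderiv.isLocalMin hdiff, hderiv.isLocalMax hdiff,
    hderiv.apply_lt_apply hdiff⟩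
  rcases hderiv.eq_or_eq_of_eq_zero ht h0 with rfl | rfl <;> contradiction
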